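/- Let k ≥ 0 and j ≥ 1 be integers and let M ∈ C^k([0,∞), ℝ). Then the j-fold convolution power M^{*j} is k times continuously differentiable on [0,∞), and for every τ > 0 one has |d^k/dτ^k M^{*j}(τ)| ≤ e^τ · ‖M‖_{C^k([0,τ])}^j. -/

import Mathlib

/-!
Writing `f(t - s) - f(0) = ∫_s^t f'(u - s) du` and exchanging the integrals over the triangle
`0 ≤ s ≤ u ≤ t` gives `(f * g)' = f(0) g + f' * g` on `[0, ∞)`, hence
`(f * g)^{(l)}(t) = ∑_{i<l} f^{(i)}(0) g^{(l-1-i)}(t) + (f^{(l)} * g)(t)`.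
If `|g^{(m)}(s)| ≤ B e^s` on `[0, τ]` for all `m ≤ k`, then, since `∫_0^x e^s ds ≤ e^x`, every term
is bounded by `sup_{[0,τ]} |f^{(i)}| · B e^x`, and summing over `i ≤ l` gives
`|(f * g)^{(l)}(x)| ≤ ‖f‖_{C^k([0,τ])} B e^x`. Induction on `j` yields the bound
`‖M‖_{C^k([0,τ])}^j e^x` for all derivatives of `M^{*j}` of order `≤ k` on `[0, τ]`.
-/

open Set MeasureTheory

/-- Convolution on `[0,∞)` (via signed interval integral): `(f*g)(t) = ∫_0^t f(t-s) g(s) ds`. -/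
noncomputable def conv (f g : ℝ → ℝ) : ℝ → ℝ :=
  fun t => ∫ s in (0:ℝ)..t, f (t - s) * g s

/-- `j`-fold convolution power of `M`, with the conventions `M^{*0} = 0` and `M^{*1} = M`. -/
noncomputable def convPow (M : ℝ → ℝ) : ℕ → ℝ → ℝ
  | 0 => fun _ => 0
  | 1 => M
  | (j+2) => conv M (convPow M (j+1))

/-- The norm `‖f‖_{C^k([0,t])} = ∑_{l=0}^k max_{0 ≤ τ ≤ t} |f^{(l)}(τ)|`,
derivatives taken within `[0,∞)`. -/
noncomputable def CkNorm (k : ℕ) (t : ℝ) (f : ℝ → ℝ) : ℝ :=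
  ∑ l ∈ Finset.range (k+1), ⨆ τ : Set.Icc (0:ℝ) t, |iteratedDerivWithin l f (Set.Ici 0) τ|

noncomputable def extendNonneg (f : ℝ → ℝ) : ℝ → ℝ := fun x => f (max x 0)

lemma extendNonneg_of_nonneg (f : ℝ → ℝ) {x : ℝ} (hx : 0 ≤ x) : extendNonneg f x = f x := by
  simp [extendNonneg, max_eq_left hx]

lemma continuous_extendNonneg {f : ℝ → ℝ} (hf : ContinuousOn f (Ici 0)) :
    Continuous (extendNonneg f) :=
  hf.comp_continuous (continuous_id.max continuous_const) fun x => le_max_right x 0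

lemma conv_congr {f₁ f₂ g₁ g₂ : ℝ → ℝ} {t : ℝ} (ht : 0 ≤ t)
    (hf : EqOn f₁ f₂ (Icc 0 t)) (hg : EqOn g₁ g₂ (Icc 0 t)) :
    conv f₁ g₁ t = conv f₂ g₂ t := by
  refine intervalIntegral.integral_congr fun s hs => ?_
  rw [uIcc_of_le ht] at hs
  simp only [hf ⟨sub_nonneg.2 hs.2, by linarith [hs.1]⟩, hg hs]

lemma conv_extendNonneg_right (f g : ℝ → ℝ) {t : ℝ} (ht : 0 ≤ t) :
    conv f (extendNonneg g) t = conv f g t :=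
  conv_congr ht (fun _ _ => rfl) fun _ hx => extendNonneg_of_nonneg g hx.1

lemma continuous_conv {f g : ℝ → ℝ} (hf : Continuous f) (hg : Continuous g) :
    Continuous (conv f g) :=
  intervalIntegral.continuous_parametric_intervalIntegral_of_continuous
    (f := fun t s => f (t - s) * g s)
    ((hf.comp (continuous_fst.sub continuous_snd)).mul (hg.comp continuous_snd)) continuous_id

lemma continuousOn_conv {f g : ℝ → ℝ} (hf : ContinuousOn f (Ici 0))
    (hg : ContinuousOn g (Ici 0)) : ContinuousOn (conv f g) (Ici 0) :=
  (continuous_conv (continuous_extendNonneg hf) (continuous_extendNonneg hg)).continuousOn.congr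
    fun _ ht => conv_congr ht (fun _ hx => (extendNonneg_of_nonneg f hx.1).symm)
      fun _ hx => (extendNonneg_of_nonneg g hx.1).symm

lemma integral_integral_swap_triangle {H : ℝ → ℝ → ℝ} (hH : Continuous (Function.uncurry H))
    {t : ℝ} (ht : 0 ≤ t) :
    ∫ u in (0:ℝ)..t, ∫ s in (0:ℝ)..u, H u s = ∫ s in (0:ℝ)..t, ∫ u in s..t, H u s := by
  set T : Set (ℝ × ℝ) := {p | p.2 ≤ p.1}
  have hT : MeasurableSet T := (isClosed_le continuous_snd continuous_fst).measurableSet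
  have hint : Integrable (T.indicator (Function.uncurry H))
      ((volume.restrict (Ioc (0:ℝ) t)).prod (volume.restrict (Ioc (0:ℝ) t))) := by
    rw [Measure.prod_restrict]
    refine IntegrableOn.indicator ?_ hT
    exact (hH.continuousOn.integrableOn_compact (isCompact_Icc.prod isCompact_Icc)).mono_set
      (prod_mono Ioc_subset_Icc_self Ioc_subset_Icc_self)
  have hleft : ∀ u ∈ Ioc (0:ℝ) t,
      ∫ s in (0:ℝ)..u, H u s = ∫ s in Ioc (0:ℝ) t, T.indicator (Function.uncurry H) (u, s) := by
    intro u hu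
    have : ∀ s, T.indicator (Function.uncurry H) (u, s) = (Iic u).indicator (H u) s := by
      intro s; by_cases h : s ≤ u <;> simp [T, h]
    simp only [this, setIntegral_indicator measurableSet_Iic, Ioc_inter_Iic, min_eq_right hu.2,
      intervalIntegral.integral_of_le hu.1.le]
  have hright : ∀ s ∈ Ioc (0:ℝ) t,
      ∫ u in s..t, H u s = ∫ u in Ioc (0:ℝ) t, T.indicator (Function.uncurry H) (u, s) := by
    intro s hs
    have : ∀ u, T.indicator (Function.uncurry H) (u, s) = (Ici s).indicator (H · s) u := by
      intro u; by_cases h : s ≤ u <;> simp [T, h]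
    have hset : Ioc (0:ℝ) t ∩ Ici s = Icc s t := by
      ext u
      simp only [mem_inter_iff, mem_Ioc, mem_Ici, mem_Icc]
      exact ⟨fun h => ⟨h.2, h.1.2⟩, fun h => ⟨⟨hs.1.trans_le h.1, h.2⟩, h.1⟩⟩
    simp only [this, setIntegral_indicator measurableSet_Ici, hset, integral_Icc_eq_integral_Ioc,
      intervalIntegral.integral_of_le hs.2]
  rw [intervalIntegral.integral_of_le ht, intervalIntegral.integral_of_le ht,
    setIntegral_congr_fun measurableSet_Ioc hleft, setIntegral_congr_fun measurableSet_Ioc hright]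
  exact integral_integral_swap hint

lemma conv_eq_add_integral_conv {f f' g : ℝ → ℝ} (hf : ContinuousOn f (Ici 0))
    (hder : ∀ x ∈ Ioi (0:ℝ), HasDerivAt f (f' x) x) (hf' : Continuous f') (hg : Continuous g)
    {t : ℝ} (ht : 0 ≤ t) :
    conv f g t = f 0 * (∫ s in (0:ℝ)..t, g s) + ∫ u in (0:ℝ)..t, conv f' g u := by
  have hinner : ∀ s ∈ uIcc (0:ℝ) t, ∫ u in s..t, f' (u - s) * g s = (f (t - s) - f 0) * g s := by
    intro s hs
    rw [uIcc_of_le ht] at hs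
    rw [intervalIntegral.integral_mul_const, intervalIntegral.integral_comp_sub_right f' s,
      sub_self, intervalIntegral.integral_eq_sub_of_hasDeriv_right_of_le (by linarith [hs.2])
        (hf.mono fun x hx => hx.1) (fun x hx => (hder x hx.1).hasDerivWithinAt)
        (hf'.intervalIntegrable _ _)]
  have hfg : IntervalIntegrable (fun s => f (t - s) * g s) volume 0 t := by
    refine ContinuousOn.intervalIntegrable (ContinuousOn.mul ?_ hg.continuousOn)
    refine hf.comp (continuous_const.sub continuous_id).continuousOn fun s hs => ?_
    rw [uIcc_of_le ht] at hs
    exact sub_nonneg.2 hs.2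
  have hswap := integral_integral_swap_triangle (H := fun u s => f' (u - s) * g s)
    ((hf'.comp (continuous_fst.sub continuous_snd)).mul (hg.comp continuous_snd)) ht
  rw [show ∫ u in (0:ℝ)..t, conv f' g u = _ from hswap, intervalIntegral.integral_congr hinner]
  simp only [sub_mul]
  rw [intervalIntegral.integral_sub hfg ((hg.intervalIntegrable 0 t).const_mul (f 0)),
    intervalIntegral.integral_const_mul]
  unfold conv
  ring

/-- The integrals in `conv_eq_add_integral_conv` need `f'` and `g` continuous on all of `ℝ`, so
they are first replaced by `extendNonneg f'` and `extendNonneg g`. -/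
lemma hasDerivWithinAt_conv {f f' g : ℝ → ℝ} (hf : ContinuousOn f (Ici 0))
    (hder : ∀ x ∈ Ici (0:ℝ), HasDerivWithinAt f (f' x) (Ici 0) x)
    (hf' : ContinuousOn f' (Ici 0)) (hg : ContinuousOn g (Ici 0)) {t : ℝ} (ht : 0 ≤ t) :
    HasDerivWithinAt (conv f g) (f 0 * g t + conv f' g t) (Ici 0) t := by
  have hF' : Continuous (extendNonneg f') := continuous_extendNonneg hf'
  have hG : Continuous (extendNonneg g) := continuous_extendNonneg hg
  have hderF' : ∀ x ∈ Ioi (0:ℝ), HasDerivAt f (extendNonneg f' x) x := fun x hx => by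
    rw [extendNonneg_of_nonneg f' (mem_Ici_of_Ioi hx)]
    exact (hder x (mem_Ici_of_Ioi hx)).hasDerivAt (Ici_mem_nhds hx)
  have hrepr : ∀ u ∈ Ici (0:ℝ),
      conv f g u = f 0 * (∫ s in (0:ℝ)..u, extendNonneg g s) +
        ∫ v in (0:ℝ)..u, conv (extendNonneg f') (extendNonneg g) v := fun u hu =>
    (conv_extendNonneg_right f g hu).symm.trans (conv_eq_add_integral_conv hf hderF' hF' hG hu)
  have hval : f 0 * extendNonneg g t + conv (extendNonneg f') (extendNonneg g) t =
      f 0 * g t + conv f' g t := by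
    rw [extendNonneg_of_nonneg g ht, conv_congr ht (fun x hx => extendNonneg_of_nonneg f' hx.1)
      fun x hx => extendNonneg_of_nonneg g hx.1]
  rw [← hval]
  have hΦ := ((hG.integral_hasStrictDerivAt 0 t).hasDerivAt.const_mul (f 0)).add
    ((continuous_conv hF' hG).integral_hasStrictDerivAt 0 t).hasDerivAt
  exact hΦ.hasDerivWithinAt.congr_of_mem hrepr ht

lemma contDiffOn_conv {f g : ℝ → ℝ} (k : ℕ) (hf : ContDiffOn ℝ k f (Ici 0))
    (hg : ContDiffOn ℝ k g (Ici 0)) : ContDiffOn ℝ k (conv f g) (Ici 0) := by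
  induction k generalizing f g with
  | zero =>
    simp only [CharP.cast_eq_zero, contDiffOn_zero] at *
    exact continuousOn_conv hf hg
  | succ k ih =>
    have hgk : ContDiffOn ℝ k g (Ici 0) := hg.of_le (by exact_mod_cast k.le_succ)
    have hfd : DifferentiableOn ℝ f (Ici 0) := hf.differentiableOn (by simp)
    rw [Nat.cast_succ, contDiffOn_succ_iff_derivWithin (uniqueDiffOn_Ici 0)] at hf ⊢
    have hconv' : ∀ t ∈ Ici (0:ℝ), HasDerivWithinAt (conv f g)
        (f 0 * g t + conv (derivWithin f (Ici 0)) g t) (Ici 0) t := fun t ht =>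
      hasDerivWithinAt_conv hfd.continuousOn (fun x hx => (hfd x hx).hasDerivWithinAt)
        hf.2.2.continuousOn hg.continuousOn ht
    refine ⟨fun t ht => (hconv' t ht).differentiableWithinAt, by simp, ?_⟩
    exact ((contDiffOn_const.mul hgk).add (ih hf.2.2 hgk)).congr fun t ht =>
      (hconv' t ht).derivWithin (uniqueDiffOn_Ici 0 t ht)

theorem ContDiffOn.hasDerivWithinAt_iteratedDerivWithin {𝕜 F : Type*}
    [NontriviallyNormedField 𝕜] [NormedAddCommGroup F] [NormedSpace 𝕜 F] {f : 𝕜 → F}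
    {s : Set 𝕜} {n : WithTop ℕ∞} {m : ℕ} {x : 𝕜} (hf : ContDiffOn 𝕜 n f s) (hmn : m < n)
    (hs : UniqueDiffOn 𝕜 s) (hx : x ∈ s) :
    HasDerivWithinAt (iteratedDerivWithin m f s) (iteratedDerivWithin (m + 1) f s x) s x := by
  rw [iteratedDerivWithin_succ]
  exact (hf.differentiableOn_iteratedDerivWithin hmn hs x hx).hasDerivWithinAt

lemma iteratedDerivWithin_conv {k l : ℕ} {f g : ℝ → ℝ} (hf : ContDiffOn ℝ k f (Ici 0))
    (hg : ContDiffOn ℝ k g (Ici 0)) (hl : l ≤ k) {t : ℝ} (ht : 0 ≤ t) :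
    iteratedDerivWithin l (conv f g) (Ici 0) t =
      ∑ i ∈ Finset.range l,
          iteratedDerivWithin i f (Ici 0) 0 * iteratedDerivWithin (l - 1 - i) g (Ici 0) t +
        conv (iteratedDerivWithin l f (Ici 0)) g t := by
  induction l generalizing t with
  | zero => simp
  | succ l ih =>
    have hUD := uniqueDiffOn_Ici (0:ℝ)
    have hlk : l < k := hl
    have hsum : HasDerivWithinAt
        (fun τ => ∑ i ∈ Finset.range l,
          iteratedDerivWithin i f (Ici 0) 0 * iteratedDerivWithin (l - 1 - i) g (Ici 0) τ)
        (∑ i ∈ Finset.range l,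
          iteratedDerivWithin i f (Ici 0) 0 * iteratedDerivWithin (l - i) g (Ici 0) t)
        (Ici 0) t := by
      refine HasDerivWithinAt.fun_sum fun i hi => HasDerivWithinAt.const_mul _ ?_
      have hsucc : l - 1 - i + 1 = l - i := by grind
      rw [← hsucc]
      exact hg.hasDerivWithinAt_iteratedDerivWithin (by exact_mod_cast (by omega)) hUD ht
    have hconv := hasDerivWithinAt_conv
      (hf.continuousOn_iteratedDerivWithin (by exact_mod_cast hlk.le) hUD)
      (fun x hx => hf.hasDerivWithinAt_iteratedDerivWithin (by exact_mod_cast hlk) hUD hx)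
      (hf.continuousOn_iteratedDerivWithin (by exact_mod_cast hl) hUD) hg.continuousOn ht
    rw [iteratedDerivWithin_succ,
      derivWithin_congr (fun _ hx => ih hlk.le (mem_Ici.1 hx)) (ih hlk.le ht),
      (hsum.fun_add hconv).derivWithin (hUD t ht), Finset.sum_range_succ]
    simp only [Nat.add_sub_cancel, Nat.sub_self, iteratedDerivWithin_zero]
    ring

theorem contDiffOn_convPow {k : ℕ} {M : ℝ → ℝ} (hM : ContDiffOn ℝ k M (Ici 0)) :
    ∀ j, ContDiffOn ℝ k (convPow M j) (Ici 0)
  | 0 => contDiffOn_const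
  | 1 => hM
  | j + 2 => contDiffOn_conv k hM (contDiffOn_convPow hM (j + 1))

/-- `CkNorm k t f` is definitionally `∑ l ∈ Finset.range (k + 1), derivSup l t f`. -/
noncomputable def derivSup (l : ℕ) (t : ℝ) (f : ℝ → ℝ) : ℝ :=
  ⨆ τ : Icc (0:ℝ) t, |iteratedDerivWithin l f (Ici 0) τ|

lemma derivSup_nonneg (l : ℕ) (t : ℝ) (f : ℝ → ℝ) : 0 ≤ derivSup l t f :=
  Real.iSup_nonneg fun _ => abs_nonneg _

lemma abs_iteratedDerivWithin_le_derivSup {k l : ℕ} {f : ℝ → ℝ} (hf : ContDiffOn ℝ k f (Ici 0))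
    (hl : l ≤ k) {t x : ℝ} (hx : x ∈ Icc 0 t) :
    |iteratedDerivWithin l f (Ici 0) x| ≤ derivSup l t f := by
  have hcont : ContinuousOn (fun y => |iteratedDerivWithin l f (Ici 0) y|) (Icc 0 t) :=
    ((hf.continuousOn_iteratedDerivWithin (by exact_mod_cast hl) (uniqueDiffOn_Ici 0)).mono
      fun y hy => hy.1).abs
  refine le_ciSup (f := fun τ : Icc (0:ℝ) t => |iteratedDerivWithin l f (Ici 0) τ|) ?_ ⟨x, hx⟩
  refine (isCompact_Icc.image_of_continuousOn hcont).bddAbove.mono ?_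
  rintro _ ⟨τ, rfl⟩
  exact ⟨τ, τ.2, rfl⟩

lemma CkNorm_nonneg (k : ℕ) (t : ℝ) (f : ℝ → ℝ) : 0 ≤ CkNorm k t f :=
  Finset.sum_nonneg fun l _ => derivSup_nonneg l t f

lemma sum_derivSup_le_CkNorm {k l : ℕ} (hl : l ≤ k) (t : ℝ) (f : ℝ → ℝ) :
    ∑ i ∈ Finset.range (l + 1), derivSup i t f ≤ CkNorm k t f :=
  Finset.sum_le_sum_of_subset_of_nonneg (Finset.range_subset_range.2 (by omega))
    fun i _ _ => derivSup_nonneg i t f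

lemma abs_conv_le {f g : ℝ → ℝ} {a b x : ℝ} (hx : 0 ≤ x) (hf : ∀ s ∈ Icc 0 x, |f s| ≤ a)
    (hg : ∀ s ∈ Icc 0 x, |g s| ≤ b * Real.exp s) :
    |conv f g x| ≤ a * b * (Real.exp x - 1) := by
  have hpt : ∀ s ∈ Ioc 0 x, ‖f (x - s) * g s‖ ≤ a * b * Real.exp s := fun s hs => by
    rw [Real.norm_eq_abs, abs_mul, mul_assoc]
    exact mul_le_mul (hf _ ⟨by linarith [hs.2], by linarith [hs.1]⟩) (hg s (Ioc_subset_Icc_self hs))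
      (abs_nonneg _) ((abs_nonneg _).trans (hf 0 ⟨le_rfl, hx⟩))
  calc |conv f g x| ≤ ∫ s in (0:ℝ)..x, a * b * Real.exp s :=
        intervalIntegral.norm_integral_le_of_norm_le hx (ae_of_all _ hpt)
          (Real.continuous_exp.intervalIntegrable 0 x |>.const_mul _)
    _ = a * b * (Real.exp x - 1) := by simp [integral_exp]

lemma abs_iteratedDerivWithin_conv_le {k l : ℕ} {f g : ℝ → ℝ} {t B x : ℝ}
    (hf : ContDiffOn ℝ k f (Ici 0)) (hg : ContDiffOn ℝ k g (Ici 0))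
    (hgB : ∀ m ≤ k, ∀ s ∈ Icc 0 t, |iteratedDerivWithin m g (Ici 0) s| ≤ B * Real.exp s)
    (hl : l ≤ k) (hx : x ∈ Icc 0 t) :
    |iteratedDerivWithin l (conv f g) (Ici 0) x| ≤ CkNorm k t f * B * Real.exp x := by
  have hB : 0 ≤ B := by
    have := (abs_nonneg _).trans (hgB 0 k.zero_le x hx)
    exact nonneg_of_mul_nonneg_left this (Real.exp_pos x)
  have hsum : |∑ i ∈ Finset.range l, iteratedDerivWithin i f (Ici 0) 0 *
      iteratedDerivWithin (l - 1 - i) g (Ici 0) x| ≤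
      ∑ i ∈ Finset.range l, derivSup i t f * (B * Real.exp x) := by
    refine (Finset.abs_sum_le_sum_abs _ _).trans (Finset.sum_le_sum fun i hi => ?_)
    have hi : i < l := Finset.mem_range.1 hi
    rw [abs_mul]
    exact mul_le_mul
      (abs_iteratedDerivWithin_le_derivSup hf (by omega) ⟨le_rfl, hx.1.trans hx.2⟩)
      (hgB _ (by omega) x hx) (abs_nonneg _) (derivSup_nonneg i t f)
  have hconv : |conv (iteratedDerivWithin l f (Ici 0)) g x| ≤ derivSup l t f * (B * Real.exp x) :=
    calc _ ≤ derivSup l t f * B * (Real.exp x - 1) :=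
          abs_conv_le hx.1
            (fun s hs => abs_iteratedDerivWithin_le_derivSup hf hl ⟨hs.1, hs.2.trans hx.2⟩)
            fun s hs => hgB 0 k.zero_le s ⟨hs.1, hs.2.trans hx.2⟩
      _ ≤ derivSup l t f * (B * Real.exp x) := by
          rw [mul_assoc]
          gcongr
          · exact derivSup_nonneg l t f
          · linarith
  rw [iteratedDerivWithin_conv hf hg hl hx.1, mul_assoc]
  calc _ ≤ _ := (abs_add_le _ _).trans (add_le_add hsum hconv)
    _ = (∑ i ∈ Finset.range (l + 1), derivSup i t f) * (B * Real.exp x) := by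
        rw [Finset.sum_range_succ, add_mul, Finset.sum_mul]
    _ ≤ CkNorm k t f * (B * Real.exp x) :=
        mul_le_mul_of_nonneg_right (sum_derivSup_le_CkNorm hl t f) (by positivity)

theorem abs_iteratedDerivWithin_convPow_le {k : ℕ} {M : ℝ → ℝ} (hM : ContDiffOn ℝ k M (Ici 0))
    (t : ℝ) : ∀ j, ∀ l ≤ k, ∀ x ∈ Icc 0 t,
      |iteratedDerivWithin l (convPow M j) (Ici 0) x| ≤ CkNorm k t M ^ j * Real.exp x
  | 0, l, _, x, _ => by simp [convPow, (Real.exp_pos x).le]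
  | 1, l, hl, x, hx => by
    rw [pow_one, convPow]
    calc _ ≤ ∑ i ∈ Finset.range (l + 1), derivSup i t M := by
          rw [Finset.sum_range_succ]
          exact le_add_of_nonneg_of_le (Finset.sum_nonneg fun i _ => derivSup_nonneg i t M)
            (abs_iteratedDerivWithin_le_derivSup hM hl hx)
      _ ≤ CkNorm k t M := sum_derivSup_le_CkNorm hl t M
      _ ≤ CkNorm k t M * Real.exp x :=
          le_mul_of_one_le_right (CkNorm_nonneg k t M) (Real.one_le_exp hx.1)
  | j + 2, l, hl, x, hx => by
    rw [convPow, pow_succ']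
    exact abs_iteratedDerivWithin_conv_le hM (contDiffOn_convPow hM (j + 1))
      (abs_iteratedDerivWithin_convPow_le hM t (j + 1)) hl hx

theorem convPow_contDiff_and_deriv_bound_general
    (k j : ℕ) (M : ℝ → ℝ) (hM : ContDiffOn ℝ k M (Set.Ici 0)) :
    ContDiffOn ℝ k (convPow M j) (Set.Ici 0) ∧
      ∀ τ : ℝ, 0 < τ →
        |iteratedDerivWithin k (convPow M j) (Set.Ici 0) τ| ≤
          Real.exp τ * (CkNorm k τ M) ^ j := by
  refine ⟨contDiffOn_convPow hM j, fun τ hτ => ?_⟩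
  rw [mul_comm]
  exact abs_iteratedDerivWithin_convPow_le hM τ j k le_rfl τ ⟨hτ.le, le_rfl⟩

/-- For `M ∈ C^k([0,∞))` and `j ≥ 1`, the `j`-fold convolution power `M^{*j}`
is `C^k` on `[0,∞)` and `|d^k/dτ^k M^{*j}(τ)| ≤ e^τ ‖M‖_{C^k([0,τ])}^j` for every `τ > 0`. -/
theorem convPow_contDiff_and_deriv_bound
    (k j : ℕ) (hj : 1 ≤ j) (M : ℝ → ℝ) (hM : ContDiffOn ℝ k M (Set.Ici 0)) :
    ContDiffOn ℝ k (convPow M j) (Set.Ici 0) ∧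
      ∀ τ : ℝ, 0 < τ →
        |iteratedDerivWithin k (convPow M j) (Set.Ici 0) τ| ≤
          Real.exp τ * (CkNorm k τ M) ^ j :=
  convPow_contDiff_and_deriv_bound_general k j M hM
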